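/- For each positive integer n, the sum over all plane forests F with n vertices of the product over all vertices v of F of (2 - 1/h_v) equals (2n+1)^(n-1)/n!, where h_v is the number of vertices in the subtree rooted at v. -/

import Mathlib

/-- A plane (ordered rooted) tree: a root together with an ordered list of
plane subtrees. -/
inductive PlaneTree where
  | node : List PlaneTree → PlaneTree

mutual
/-- Number of vertices of a plane tree. -/
def PlaneTree.size : PlaneTree → ℕ
  | .node ts => 1 + sizeList ts
/-- Total number of vertices of a list of plane trees. -/
def sizeList : List PlaneTree → ℕ
  | [] => 0
  | t :: ts => PlaneTree.size t + sizeList ts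
end

mutual
/-- The multiset of hook lengths of the vertices of a plane tree
(the hook length of a vertex is the number of vertices in the subtree
rooted at it, including itself). -/
def PlaneTree.hooks : PlaneTree → Multiset ℕ
  | .node ts => (PlaneTree.node ts).size ::ₘ hooksList ts
/-- The multiset of hook lengths of all vertices of a list of plane trees. -/
def hooksList : List PlaneTree → Multiset ℕ
  | [] => 0
  | t :: ts => PlaneTree.hooks t + hooksList ts
end

/-- A plane forest is an ordered list of plane trees; its size is the total
number of vertices. -/
def forestSize (F : List PlaneTree) : ℕ := sizeList F

/-- The multiset of hook lengths of all vertices of a plane forest. -/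
def forestHooks (F : List PlaneTree) : Multiset ℕ := hooksList F

/-!
Removing the root of the first tree splits a forest of size `k + 1` into the subforest of that
root and the remaining trees, of sizes `i + j = k`. Hence the weighted counts `g n` satisfy
`g 0 = 1` and `g (k + 1) = ∑_{i + j = k} (2 - 1/(i+1)) g i g j`.

The closed form is `A_n(1)` for the normalised Abel polynomials `A_n(x) = x (x + 2n)^(n-1) / n!`.
Since `A_n' (x) = A_(n-1) (x + 2)` and `A_n(0) = 0` for `n ≥ 1`, they are of binomial type:
`A_n(x + y) = ∑_{i + j = n} A_i(x) A_j(y)`. As `(2 - 1/(i+1)) A_i(1) = -A_(i+1)(-1)`, taking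
`x = -1`, `y = 1` turns this convolution into the recursion for `g`.
-/

open Polynomial Finset

theorem Polynomial.eq_of_derivative_eq_of_eval_zero_eq {R : Type*} [Ring R] [IsAddTorsionFree R]
    {p q : R[X]} (hd : derivative p = derivative q) (h0 : p.eval 0 = q.eval 0) : p = q := by
  have hc := eq_C_of_derivative_eq_zero (p := p - q) (by rw [derivative_sub, hd, sub_self])
  rwa [coeff_zero_eq_eval_zero, eval_sub, h0, sub_self, map_zero, sub_eq_zero] at hc

section AbelPolynomial

variable {K : Type*} [Field K]

noncomputable def abelPoly (z : K) : ℕ → K[X]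
  | 0 => 1
  | n + 1 => C ((n + 1).factorial : K)⁻¹ * X * (X + C ((n + 1) * z)) ^ n

variable (z : K)

@[simp] theorem abelPoly_zero : abelPoly z 0 = 1 := rfl

theorem eval_abelPoly_succ (x : K) (n : ℕ) :
    (abelPoly z (n + 1)).eval x = x * (x + (n + 1) * z) ^ n / (n + 1).factorial := by
  simp only [abelPoly, eval_mul, eval_C, eval_X, eval_pow, eval_add]
  ring

theorem eval_zero_abelPoly_succ (n : ℕ) : (abelPoly z (n + 1)).eval 0 = 0 := by
  rw [eval_abelPoly_succ, zero_mul, zero_div]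

theorem derivative_abelPoly_succ [CharZero K] (n : ℕ) :
    derivative (abelPoly z (n + 1)) = (abelPoly z n).comp (X + C z) := by
  rcases n with _ | n
  · simp [abelPoly]
  · simp only [abelPoly, derivative_mul, derivative_C, derivative_X, derivative_X_add_C_pow,
      mul_comp, C_comp, X_comp, pow_comp, add_comp]
    have hfac : ((n + 2).factorial : K) = (n + 2) * (n + 1).factorial := by
      push_cast [Nat.factorial_succ]; ring
    have hinv : C ((n + 2 : K))⁻¹ * C ((n : K) + 2) = 1 := by
      rw [← C_mul, inv_mul_cancel₀ (by exact_mod_cast (n + 1).succ_ne_zero), C_1]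
    rw [hfac, mul_inv, C_mul]
    simp only [Nat.add_sub_cancel, map_mul, map_add, map_natCast, map_ofNat, C_1, Nat.cast_add,
      Nat.cast_one] at hinv ⊢
    linear_combination
      C ((n + 1).factorial : K)⁻¹ * (X + C z) * (X + ((n : K[X]) + 2) * C z) ^ n * hinv

theorem abelPoly_comp_X_add_C [CharZero K] (y : K) (n : ℕ) :
    (abelPoly z n).comp (X + C y) =
      ∑ p ∈ antidiagonal n, abelPoly z p.1 * C ((abelPoly z p.2).eval y) := by
  induction n with
  | zero => simp
  | succ n ih =>
    apply eq_of_derivative_eq_of_eval_zero_eq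
    · have hshift : (X + C y).comp (X + C z) = (X + C z).comp (X + C y) := by
        simp only [add_comp, X_comp, C_comp]; ring
      rw [derivative_comp, derivative_abelPoly_succ, derivative_sum, Nat.sum_antidiagonal_succ]
      simp only [derivative_mul, derivative_C, derivative_abelPoly_succ, abelPoly_zero, mul_zero,
        add_zero, derivative_add, derivative_X, one_mul, zero_add]
      rw [comp_assoc, ← hshift, ← comp_assoc, ih, Polynomial.sum_comp]
      simp only [mul_comp, C_comp]
    · rw [Nat.sum_antidiagonal_succ]
      simp [eval_comp, eval_finsetSum, eval_zero_abelPoly_succ]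

theorem abelPoly_eval_add [CharZero K] (x y : K) (n : ℕ) :
    (abelPoly z n).eval (x + y) =
      ∑ p ∈ antidiagonal n, (abelPoly z p.1).eval x * (abelPoly z p.2).eval y := by
  simpa [eval_comp, eval_finsetSum] using congrArg (eval x) (abelPoly_comp_X_add_C z y n)

end AbelPolynomial

theorem forestSize_cons_node (ts F : List PlaneTree) :
    forestSize (.node ts :: F) = forestSize ts + forestSize F + 1 := by
  simp only [forestSize, sizeList, PlaneTree.size]
  omega

theorem forestHooks_cons_node (ts F : List PlaneTree) :
    forestHooks (.node ts :: F) = (forestSize ts + 1) ::ₘ (forestHooks ts + forestHooks F) := by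
  simp only [forestHooks, hooksList, PlaneTree.hooks, PlaneTree.size, forestSize, Multiset.cons_add,
    add_comm 1]

theorem eq_nil_of_forestSize_eq_zero {F : List PlaneTree} (h : forestSize F = 0) : F = [] := by
  rcases F with _ | ⟨⟨ts⟩, F⟩
  · rfl
  · rw [forestSize_cons_node] at h
    omega

abbrev ForestsOfSize (n : ℕ) := {F : List PlaneTree // forestSize F = n}

instance : Unique (ForestsOfSize 0) where
  default := ⟨[], rfl⟩
  uniq F := Subtype.ext (eq_nil_of_forestSize_eq_zero F.2)

def consNode (k : ℕ) (x : Σ p : antidiagonal k, ForestsOfSize p.1.1 × ForestsOfSize p.1.2) :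
    ForestsOfSize (k + 1) :=
  ⟨.node x.2.1.1 :: x.2.2.1, by
    rw [forestSize_cons_node, x.2.1.2, x.2.2.2, mem_antidiagonal.mp x.1.2]⟩

theorem consNode_bijective (k : ℕ) : Function.Bijective (consNode k) := by
  constructor
  · rintro ⟨⟨p, hp⟩, ⟨ts, hts⟩, ⟨F, hF⟩⟩ ⟨⟨q, hq⟩, ⟨ts', hts'⟩, ⟨F', hF'⟩⟩ h
    simp only [consNode, Subtype.mk.injEq, List.cons.injEq, PlaneTree.node.injEq] at h
    obtain ⟨rfl, rfl⟩ := h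
    obtain rfl : p = q := Prod.ext (hts.symm.trans hts') (hF.symm.trans hF')
    rfl
  · rintro ⟨_ | ⟨⟨ts⟩, F⟩, hF⟩
    · cases hF
    · rw [forestSize_cons_node] at hF
      exact ⟨⟨⟨(forestSize ts, forestSize F), mem_antidiagonal.mpr (by omega)⟩,
        ⟨ts, rfl⟩, ⟨F, rfl⟩⟩, rfl⟩

instance (n : ℕ) : Finite (ForestsOfSize n) := by
  induction n using Nat.strong_induction_on with
  | _ n ih =>
    rcases n with _ | k
    · infer_instance
    · have (p : antidiagonal k) : Finite (ForestsOfSize p.1.1 × ForestsOfSize p.1.2) := by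
        have := mem_antidiagonal.mp p.2
        have := ih p.1.1 (by omega)
        have := ih p.1.2 (by omega)
        infer_instance
      exact Finite.of_surjective _ (consNode_bijective k).2

noncomputable instance (n : ℕ) : Fintype (ForestsOfSize n) := Fintype.ofFinite _

section ForestHookSum

variable {R : Type*} [CommSemiring R] (φ : ℕ → R)

noncomputable def forestHookSum (n : ℕ) : R :=
  ∑ F : ForestsOfSize n, ((forestHooks F.1).map φ).prod

theorem forestHookSum_zero : forestHookSum φ 0 = 1 := by
  rw [forestHookSum, Fintype.sum_unique]
  exact Multiset.prod_zero

theorem forestHookSum_succ (k : ℕ) :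
    forestHookSum φ (k + 1) =
      ∑ p ∈ antidiagonal k, φ (p.1 + 1) * forestHookSum φ p.1 * forestHookSum φ p.2 := by
  rw [forestHookSum, ← (consNode_bijective k).sum_comp (fun F => ((forestHooks F.1).map φ).prod),
    Fintype.sum_sigma, ← sum_coe_sort (antidiagonal k)]
  refine sum_congr rfl fun p _ => ?_
  rw [Fintype.sum_prod_type, forestHookSum, forestHookSum, mul_assoc, sum_mul_sum, mul_sum]
  refine sum_congr rfl fun ts _ => ?_
  rw [mul_sum]
  refine sum_congr rfl fun F _ => ?_
  simp only [consNode, forestHooks_cons_node, ts.2, Multiset.map_cons, Multiset.prod_cons,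
    Multiset.map_add, Multiset.prod_add]

end ForestHookSum

theorem abelPoly_two_eval_one (n : ℕ) :
    (abelPoly (2 : ℝ) n).eval 1 = (2 * n + 1) ^ (n - 1) / n.factorial := by
  rcases n with _ | n
  · simp
  · rw [eval_abelPoly_succ]
    push_cast
    ring

theorem abelPoly_two_eval_neg_one_succ (n : ℕ) :
    (abelPoly (2 : ℝ) (n + 1)).eval (-1) = -((2 - 1 / (n + 1)) * (abelPoly (2 : ℝ) n).eval 1) := by
  rw [abelPoly_two_eval_one]
  rcases n with _ | n
  · norm_num [eval_abelPoly_succ]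
  · rw [eval_abelPoly_succ, Nat.factorial_succ]
    push_cast
    field_simp
    ring

theorem abelPoly_two_eval_one_succ (k : ℕ) :
    (abelPoly (2 : ℝ) (k + 1)).eval 1 =
      ∑ p ∈ antidiagonal k, (2 - 1 / ((p.1 : ℝ) + 1)) *
        (abelPoly (2 : ℝ) p.1).eval 1 * (abelPoly (2 : ℝ) p.2).eval 1 := by
  -- Abel's convolution at `x = -1`, `y = 1`, where the left side vanishes.
  have h := abelPoly_eval_add (2 : ℝ) (-1) 1 (k + 1)
  rw [neg_add_cancel, eval_zero_abelPoly_succ, Nat.sum_antidiagonal_succ] at h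
  simp only [abelPoly_two_eval_neg_one_succ, abelPoly_zero, eval_one, one_mul, neg_mul,
    sum_neg_distrib] at h
  linarith

theorem forestHookSum_eq_abelPoly_eval (n : ℕ) :
    forestHookSum (fun h : ℕ => (2 : ℝ) - 1 / h) n = (abelPoly (2 : ℝ) n).eval 1 := by
  induction n using Nat.strong_induction_on with
  | _ n ih =>
    rcases n with _ | k
    · rw [forestHookSum_zero, abelPoly_zero, eval_one]
    · rw [forestHookSum_succ, abelPoly_two_eval_one_succ]
      refine sum_congr rfl fun p hp => ?_
      have := mem_antidiagonal.mp hp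
      rw [ih p.1 (by omega), ih p.2 (by omega)]
      push_cast
      rfl

/-- Proposition 5 (Du–Liu): hook length formula for plane forests. -/
theorem du_liu_plane_forests (n : ℕ) (hn : 1 ≤ n) :
    ∑' F : {F : List PlaneTree // forestSize F = n},
      ((forestHooks F.1).map (fun h => (2 : ℝ) - 1 / h)).prod
      = (2 * (n : ℝ) + 1) ^ (n - 1) / (Nat.factorial n : ℝ) := by
  rw [tsum_fintype, ← abelPoly_two_eval_one, ← forestHookSum_eq_abelPoly_eval]
  -- the statement coerces the hook multiset to `Multiset ℝ` through `bind`/`pure`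
  simp [forestHookSum, Multiset.map_map]
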